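/- Let k ≥ 2 and let E = Λ^•(ℂ^k) with the fermionic creation operators a_i (wedge with e_i) and annihilation operators a_i^* (contraction by ε_i). Then: (1) the linear span L of the operators {a_i a_j, a_i^* a_j^*, a_i a_j^* − (1/2)δ_{ij}·id : 1 ≤ i, j ≤ k} is a Lie subalgebra of End(E) (under commutators) of dimension 2k² − k, isomorphic as a Lie algebra to so(2k,ℂ); (2) the even part Λ^{even}(ℂ^k) of E is invariant under L and is an irreducible L-module (the half-spin representation); (3) setting X_i^+ := a_{i+1} a_i^* and X_i^- := a_i a_{i+1}^* for 1 ≤ i ≤ k−1, X_k^+ := a_k^* a_{k−1}^* and X_k^- := a_{k−1} a_k, and H_i := [X_i^+, X_i^-], the element 1 ∈ Λ^0 satisfies X_i^+(1) = 0 for all i, H_i(1) = 0 for i < k, and H_k(1) = 1; that is, 1 is a highest weight vector of the k-th fundamental weight, so the spinor representation of so(2k,ℂ) is the k-th fundamental representation. -/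

import Mathlib

/- Concrete model of the exterior algebra Λ^•(W) for W = ℂ^{2n}:
   an element is a coordinate function on the basis {χ_S}, S ⊆ {1,…,2n}. -/

open scoped Classical
open Matrix

noncomputable section

attribute [local instance 100] LieRing.ofAssociativeRing

/-- Model of Λ^•(ℂ^N): coordinates with respect to the basis of wedge monomials. -/
abbrev Fock (N : ℕ) := Finset (Fin N) → ℂ

/-- The Koszul sign (−1)^{#{j ∈ S : j < i}}. -/
def sgn {N : ℕ} (i : Fin N) (S : Finset (Fin N)) : ℂ :=
  (-1) ^ (S.filter (fun j => j < i)).card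

/-- Generic "matrix-element" operator used to define creation/annihilation. -/
def fockOp {N : ℕ} (c : Finset (Fin N) → ℂ) (g : Finset (Fin N) → Finset (Fin N)) :
    Module.End ℂ (Fock N) where
  toFun f := fun S => c S * f (g S)
  map_add' f₁ f₂ := by funext S; simp [Pi.add_apply, mul_add]
  map_smul' r f := by funext S; simp [Pi.smul_apply, smul_eq_mul]; ring

/-- Left exterior multiplication by the basis vector indexed by `i`. -/
def wedgeOp {N : ℕ} (i : Fin N) : Module.End ℂ (Fock N) :=
  fockOp (fun S => if i ∈ S then sgn i S else 0) (fun S => S.erase i)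

/-- Contraction (interior product) by the dual basis vector indexed by `i`. -/
def contrOp {N : ℕ} (i : Fin N) : Module.End ℂ (Fock N) :=
  fockOp (fun S => if i ∈ S then 0 else sgn i S) (fun S => insert i S)

/-- The homogeneous component Λ^i(ℂ^N). -/
def degSub (N i : ℕ) : Submodule ℂ (Fock N) where
  carrier := {f | ∀ S : Finset (Fin N), S.card ≠ i → f S = 0}
  add_mem' := by intro f g hf hg S hS; simp [Pi.add_apply, hf S hS, hg S hS]
  zero_mem' := by intro S hS; rfl
  smul_mem' := by intro c f hf S hS; simp [Pi.smul_apply, hf S hS]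

/-- The even part Λ^{even}(ℂ^N). -/
def evenSub (N : ℕ) : Submodule ℂ (Fock N) where
  carrier := {f | ∀ S : Finset (Fin N), ¬ Even S.card → f S = 0}
  add_mem' := by intro f g hf hg S hS; simp [Pi.add_apply, hf S hS, hg S hS]
  zero_mem' := by intro S hS; rfl
  smul_mem' := by intro c f hf S hS; simp [Pi.smul_apply, hf S hS]

/-- The vacuum vector 1 ∈ Λ⁰. -/
def vac (N : ℕ) : Fock N := fun S => if S = ∅ then 1 else 0

/-- The generating set {a_i a_j, a_i^* a_j^*, a_i a_j^* − (1/2)δ_{ij}·id}. -/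
def soOps (k : ℕ) : Set (Module.End ℂ (Fock k)) :=
  {T | (∃ i j : Fin k, T = wedgeOp i * wedgeOp j) ∨
       (∃ i j : Fin k, T = contrOp i * contrOp j) ∨
       (∃ i j : Fin k, T = wedgeOp i * contrOp j -
          (if i = j then ((1 : ℂ)/2) • (1 : Module.End ℂ (Fock k)) else 0))}

/-! The operators `c_p` (`p ∈ Fin k ⊕ Fin k`: first the `a_i`, then the `a_i^*`) satisfy
`c_p c_q + c_q c_p = J_pq` with `J` the split form `JD`. For skew `M` the quadratic elements
`Q(M) = ∑ M_pq c_p c_q` then satisfy `[Q(M), c_r] = ∑_p 2 (M J)_pr c_p` and, by the derivation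
rule, `[Q(M), Q(N)] = 2 Q(MJN - NJM)`; hence `X ↦ ½ Q(J X)` is a Lie algebra map from
`so(J) = typeD` into `End(E)`. It is injective because its image acts on the span of the
linearly independent `c_p` through the matrix `J X J`, and its image is spanned by the
`[c_p, c_q]`, which are twice the generators of `L`. Since `typeD ≅ so(2k)`, this gives (1).

The generators change the degree by an even amount, which gives invariance of the even part.
For irreducibility, `a_i a_i^*` and `a_i^* a_i` lie in `L + ℂ` and project onto the monomials
containing, resp. not containing, `i`; so an invariant subspace containing a vector with a
nonzero coefficient at `S` contains the monomial `e_S`, and the pairs `a_i a_j`, `a_j^* a_i^*`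
move between any two even monomials. Finally every `a_i^*` kills `1`, and
`a_{k-1}^* a_{k-2}^* a_{k-2} a_{k-1} 1 = 1` follows from the anticommutation relations alone. -/

section Signs
variable {N : ℕ}

lemma sgn_mul_self (i : Fin N) (S : Finset (Fin N)) : sgn i S * sgn i S = 1 := by
  rw [sgn, ← pow_add, ← two_mul, pow_mul, neg_one_sq, one_pow]

lemma sgn_ne_zero (i : Fin N) (S : Finset (Fin N)) : sgn i S ≠ 0 :=
  left_ne_zero_of_mul_eq_one (sgn_mul_self i S)

lemma sgn_insert_self (i : Fin N) (S : Finset (Fin N)) : sgn i (insert i S) = sgn i S := by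
  simp [sgn, Finset.filter_insert]

lemma sgn_erase_self (i : Fin N) (S : Finset (Fin N)) : sgn i (S.erase i) = sgn i S := by
  simp [sgn, Finset.filter_erase]

lemma sgn_insert {i j : Fin N} {S : Finset (Fin N)} (hj : j ∉ S) :
    sgn i (insert j S) = (if j < i then -1 else 1) * sgn i S := by
  unfold sgn
  rw [Finset.filter_insert]
  split_ifs with hji
  · rw [Finset.card_insert_of_notMem (fun h => hj (Finset.mem_filter.1 h).1), pow_succ, mul_comm]
  · rw [one_mul]

lemma sgn_erase {i j : Fin N} {S : Finset (Fin N)} (hj : j ∈ S) :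
    sgn i (S.erase j) = (if j < i then -1 else 1) * sgn i S := by
  have h := sgn_insert (i := i) (Finset.notMem_erase j S)
  rw [Finset.insert_erase hj] at h
  rw [h]
  split_ifs <;> ring

lemma ite_lt_add_ite_lt {i j : Fin N} (hij : i ≠ j) :
    ((if j < i then -1 else 1) + (if i < j then -1 else 1) : ℂ) = 0 := by
  rcases hij.lt_or_gt with h | h <;> simp [h, h.not_gt]

end Signs

section CAR
variable {N : ℕ}

lemma wedgeOp_apply (i : Fin N) (f : Fock N) (S : Finset (Fin N)) :
    wedgeOp i f S = (if i ∈ S then sgn i S else 0) * f (S.erase i) := rfl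

lemma contrOp_apply (i : Fin N) (f : Fock N) (S : Finset (Fin N)) :
    contrOp i f S = (if i ∈ S then 0 else sgn i S) * f (insert i S) := rfl

lemma wedgeOp_anticomm (i j : Fin N) : wedgeOp i * wedgeOp j + wedgeOp j * wedgeOp i = 0 := by
  refine LinearMap.ext fun f => funext fun S => ?_
  simp only [LinearMap.add_apply, Pi.add_apply, Module.End.mul_apply, LinearMap.zero_apply,
    Pi.zero_apply, wedgeOp_apply]
  by_cases hij : i = j
  · subst hij
    simp
  by_cases hi : i ∈ S <;> by_cases hj : j ∈ S
  · simp only [hi, hj, Finset.mem_erase, Ne.symm hij, hij, ne_eq, not_false_eq_true, true_and,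
      if_true, sgn_erase hi, sgn_erase hj, Finset.erase_right_comm (a := i) (b := j)]
    linear_combination (sgn i S * sgn j S * f ((S.erase j).erase i)) * ite_lt_add_ite_lt hij
  all_goals simp [hi, hj]

lemma contrOp_anticomm (i j : Fin N) : contrOp i * contrOp j + contrOp j * contrOp i = 0 := by
  refine LinearMap.ext fun f => funext fun S => ?_
  simp only [LinearMap.add_apply, Pi.add_apply, Module.End.mul_apply, LinearMap.zero_apply,
    Pi.zero_apply, contrOp_apply]
  by_cases hij : i = j
  · subst hij
    simp
  by_cases hi : i ∈ S <;> by_cases hj : j ∈ S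
  pick_goal 4
  · simp only [hi, hj, Finset.mem_insert, hij, Ne.symm hij, or_self, if_false,
      sgn_insert hi, sgn_insert hj, Finset.insert_comm i j]
    linear_combination (sgn i S * sgn j S * f (insert j (insert i S))) * ite_lt_add_ite_lt hij
  all_goals simp [hi, hj]

lemma wedgeOp_contrOp_anticomm (i j : Fin N) :
    wedgeOp i * contrOp j + contrOp j * wedgeOp i = (if i = j then (1 : ℂ) else 0) • 1 := by
  refine LinearMap.ext fun f => funext fun S => ?_
  simp only [LinearMap.add_apply, Pi.add_apply, Module.End.mul_apply, LinearMap.smul_apply,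
    Pi.smul_apply, Module.End.one_apply, smul_eq_mul, wedgeOp_apply, contrOp_apply]
  by_cases hij : i = j
  · subst hij
    by_cases hi : i ∈ S
    · simp [hi, Finset.insert_erase, sgn_erase_self, ← mul_assoc, sgn_mul_self]
    · simp [hi, sgn_insert_self, ← mul_assoc, sgn_mul_self]
  by_cases hi : i ∈ S <;> by_cases hj : j ∈ S
  pick_goal 2
  · simp only [hi, hj, hij, Finset.mem_erase, Finset.mem_insert, sgn_erase hi, sgn_insert hj,
      Finset.erase_insert_of_ne (Ne.symm hij), and_false, false_or, if_true, if_false]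
    linear_combination (sgn i S * sgn j S * f (insert j (S.erase i))) * ite_lt_add_ite_lt hij
  all_goals simp [hi, hj, hij, Ne.symm hij]

lemma wedgeOp_mul_contrOp_self_apply (i : Fin N) (f : Fock N) (S : Finset (Fin N)) :
    (wedgeOp i * contrOp i) f S = if i ∈ S then f S else 0 := by
  by_cases hi : i ∈ S
  · simp [Module.End.mul_apply, wedgeOp_apply, contrOp_apply, hi, sgn_erase_self,
      ← mul_assoc, sgn_mul_self]
  · simp [Module.End.mul_apply, wedgeOp_apply, hi]

lemma contrOp_mul_wedgeOp_self_apply (i : Fin N) (f : Fock N) (S : Finset (Fin N)) :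
    (contrOp i * wedgeOp i) f S = if i ∈ S then 0 else f S := by
  by_cases hi : i ∈ S
  · simp [Module.End.mul_apply, contrOp_apply, hi]
  · simp [Module.End.mul_apply, wedgeOp_apply, contrOp_apply, hi, sgn_insert_self,
      ← mul_assoc, sgn_mul_self]

end CAR

section Basis
variable {N : ℕ}

lemma wedgeOp_single_of_notMem {i : Fin N} {S : Finset (Fin N)} (hi : i ∉ S) :
    wedgeOp i (Pi.single S 1) = sgn i S • Pi.single (insert i S) 1 := by
  funext T
  by_cases hT : T = insert i S
  · subst hT
    simp [wedgeOp_apply, sgn_insert_self, Finset.erase_insert hi]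
  · have : i ∈ T → T.erase i ≠ S := fun hiT h => hT (h ▸ (Finset.insert_erase hiT).symm)
    by_cases hiT : i ∈ T <;> simp [wedgeOp_apply, hT, hiT, this]

lemma contrOp_single_of_mem {i : Fin N} {S : Finset (Fin N)} (hi : i ∈ S) :
    contrOp i (Pi.single S 1) = sgn i S • Pi.single (S.erase i) 1 := by
  funext T
  by_cases hT : T = S.erase i
  · subst hT
    simp [contrOp_apply, sgn_erase_self, Finset.insert_erase hi]
  · have : i ∉ T → insert i T ≠ S := fun hiT h => hT (h ▸ (Finset.erase_insert hiT).symm)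
    by_cases hiT : i ∈ T <;> simp [contrOp_apply, hT, hiT, this]

lemma vac_eq_single : vac N = Pi.single ∅ 1 := by
  funext S
  simp [vac, Pi.single_apply]

lemma contrOp_vac (i : Fin N) : contrOp i (vac N) = 0 := by
  funext S
  simp [contrOp_apply, vac]

lemma wedgeOp_vac (i : Fin N) : wedgeOp i (vac N) = Pi.single {i} 1 := by
  rw [vac_eq_single, wedgeOp_single_of_notMem (Finset.notMem_empty i)]
  simp [sgn]

end Basis

section Quadratic

variable {R A ι : Type*} [CommRing R]

lemma entry_eq_neg_of_transpose_eq_neg {M : Matrix ι ι R} (hM : Mᵀ = -M) (p q : ι) :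
    M q p = -M p q := by
  simpa using congr_fun (congr_fun hM p) q

variable [Ring A] [Algebra R A] [Fintype ι]

def quadOp (c : ι → A) : Matrix ι ι R →ₗ[R] A where
  toFun M := ∑ p, ∑ q, M p q • (c p * c q)
  map_add' M N := by simp only [Matrix.add_apply, add_smul, Finset.sum_add_distrib]
  map_smul' r M := by
    simp only [Matrix.smul_apply, smul_eq_mul, mul_smul, Finset.smul_sum, RingHom.id_apply]

variable {c : ι → A} {J : Matrix ι ι R}

lemma quadOp_apply (M : Matrix ι ι R) : quadOp c M = ∑ p, ∑ q, M p q • (c p * c q) := rfl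

lemma sum_smul_sum_mul_eq_quadOp (X N : Matrix ι ι R) :
    ∑ p, ∑ q, N p q • ((∑ r, X r p • c r) * c q) = quadOp c (X * N) := by
  simp only [quadOp_apply, Matrix.mul_apply, Finset.sum_mul, Finset.smul_sum, Finset.sum_smul,
    smul_mul_assoc, smul_smul]
  rw [Finset.sum_comm_cycle]
  exact Finset.sum_congr rfl fun r _ => by rw [Finset.sum_comm]; simp only [mul_comm]

lemma sum_smul_mul_sum_eq_quadOp (X N : Matrix ι ι R) :
    ∑ p, ∑ q, N p q • (c p * ∑ r, X r q • c r) = quadOp c (N * Xᵀ) := by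
  simp only [quadOp_apply, Matrix.mul_apply, Matrix.transpose_apply, Finset.mul_sum,
    Finset.smul_sum, Finset.sum_smul, mul_smul_comm, smul_smul]
  refine Finset.sum_congr rfl fun p _ => Finset.sum_comm

lemma quadOp_mul_sub_mul (hc : ∀ p q, c p * c q + c q * c p = J p q • 1)
    {M : Matrix ι ι R} (hM : Mᵀ = -M) (r : ι) :
    quadOp c M * c r - c r * quadOp c M = ∑ p, ((2 : R) • (M * J)) p r • c p := by
  have hcube : ∀ p q, c p * c q * c r - c r * (c p * c q) = J q r • c p - J p r • c q := by
    intro p q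
    have : c p * c q * c r - c r * (c p * c q)
        = c p * (c q * c r + c r * c q) - (c p * c r + c r * c p) * c q := by noncomm_ring
    rw [this, hc, hc, mul_smul_comm, smul_mul_assoc, mul_one, one_mul]
  calc quadOp c M * c r - c r * quadOp c M
      = ∑ p, ∑ q, M p q • (J q r • c p - J p r • c q) := by
        simp only [quadOp_apply, Finset.sum_mul, Finset.mul_sum, ← Finset.sum_sub_distrib,
          smul_mul_assoc, mul_smul_comm, ← smul_sub, hcube]
    _ = ∑ p, ∑ q, (2 * (M p q * J q r)) • c p := by
        have hswap : ∑ p, ∑ q, (M p q * J p r) • c q = -∑ p, ∑ q, (M p q * J q r) • c p := by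
          rw [Finset.sum_comm]
          simp only [← Finset.sum_neg_distrib, ← neg_smul, ← neg_mul,
            ← entry_eq_neg_of_transpose_eq_neg hM]
        simp only [smul_sub, Finset.sum_sub_distrib, smul_smul, hswap, sub_neg_eq_add,
          ← Finset.sum_add_distrib, ← add_smul, two_mul]
    _ = ∑ p, ((2 : R) • (M * J)) p r • c p := by
        simp only [Matrix.smul_apply, Matrix.mul_apply, smul_eq_mul, Finset.mul_sum,
          Finset.sum_smul]

lemma quadOp_mul_quadOp_sub_mul_quadOp (hc : ∀ p q, c p * c q + c q * c p = J p q • 1)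
    (hJ : Jᵀ = J) {M : Matrix ι ι R} (hM : Mᵀ = -M) (N : Matrix ι ι R) :
    quadOp c M * quadOp c N - quadOp c N * quadOp c M
      = quadOp c ((2 : R) • (M * J * N - N * J * M)) := by
  set X := (2 : R) • (M * J)
  have hderiv : ∀ p q, quadOp c M * (c p * c q) - c p * c q * quadOp c M
      = (∑ r, X r p • c r) * c q + c p * ∑ r, X r q • c r := by
    intro p q
    rw [← quadOp_mul_sub_mul hc hM p, ← quadOp_mul_sub_mul hc hM q]
    noncomm_ring
  have hXt : Xᵀ = -((2 : R) • (J * M)) := by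
    simp only [X, Matrix.transpose_smul, Matrix.transpose_mul, hJ, hM, Matrix.mul_neg, smul_neg]
  calc quadOp c M * quadOp c N - quadOp c N * quadOp c M
      = ∑ p, ∑ q, N p q • (quadOp c M * (c p * c q) - c p * c q * quadOp c M) := by
        simp only [quadOp_apply N, Finset.mul_sum, Finset.sum_mul, mul_smul_comm, smul_mul_assoc,
          ← Finset.sum_sub_distrib, smul_sub]
    _ = quadOp c (X * N) + quadOp c (N * Xᵀ) := by
        simp only [hderiv, smul_add, Finset.sum_add_distrib, sum_smul_sum_mul_eq_quadOp,
          sum_smul_mul_sum_eq_quadOp]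
    _ = quadOp c ((2 : R) • (M * J * N - N * J * M)) := by
        rw [← map_add, hXt]
        congr 1
        simp only [X, Matrix.smul_mul, Matrix.mul_neg, Matrix.mul_smul, Matrix.mul_assoc, smul_sub]
        abel

lemma smul_quadOp_eq_sum_commutator {M : Matrix ι ι R} (hM : Mᵀ = -M) :
    (2 : R) • quadOp c M = ∑ p, ∑ q, M p q • (c p * c q - c q * c p) := by
  have hswap : ∑ p, ∑ q, M p q • (c q * c p) = -quadOp c M := by
    rw [Finset.sum_comm, quadOp_apply]
    simp only [← Finset.sum_neg_distrib, ← neg_smul, ← entry_eq_neg_of_transpose_eq_neg hM]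
  simp only [smul_sub, Finset.sum_sub_distrib, ← quadOp_apply, hswap, two_smul, sub_neg_eq_add]

end Quadratic

section SpinHom

variable {R A ι : Type*} [CommRing R] [Ring A] [Algebra R A] [Fintype ι] [DecidableEq ι]
  {c : ι → A} {J : Matrix ι ι R}

lemma transpose_mul_eq_neg_of_mem_skewAdjoint (hJ : Jᵀ = J) {X : Matrix ι ι R}
    (hX : X ∈ skewAdjointMatricesLieSubalgebra J) : (J * X)ᵀ = -(J * X) := by
  rw [mem_skewAdjointMatricesLieSubalgebra, mem_skewAdjointMatricesSubmodule,
    Matrix.IsSkewAdjoint, Matrix.IsAdjointPair] at hX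
  rw [Matrix.transpose_mul, hJ, hX, Matrix.mul_neg]

lemma quadOp_single (p q : ι) : quadOp c (Matrix.single p q (1 : R)) = c p * c q := by
  simp [quadOp_apply, Matrix.single_apply, ite_smul, ite_and]

lemma mul_single_sub_single_mem_skewAdjoint (hJ : Jᵀ = J) (hJJ : J * J = 1) (p q : ι) :
    J * (Matrix.single p q (1 : R) - Matrix.single q p 1) ∈ skewAdjointMatricesLieSubalgebra J := by
  rw [mem_skewAdjointMatricesLieSubalgebra, mem_skewAdjointMatricesSubmodule,
    Matrix.IsSkewAdjoint, Matrix.IsAdjointPair, Matrix.transpose_mul, hJ, Matrix.mul_assoc, hJJ,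
    Matrix.mul_one, Matrix.mul_neg, ← Matrix.mul_assoc, hJJ, Matrix.one_mul, Matrix.transpose_sub,
    Matrix.transpose_single, Matrix.transpose_single, neg_sub]

variable [Invertible (2 : R)]

def spinHom (hc : ∀ p q, c p * c q + c q * c p = J p q • 1) (hJ : Jᵀ = J) (hJJ : J * J = 1) :
    skewAdjointMatricesLieSubalgebra J →ₗ⁅R⁆ A where
  toFun X := (⅟2 : R) • quadOp c (J * (X : Matrix ι ι R))
  map_add' X Y := by simp [Matrix.mul_add]
  map_smul' r X := by simp [smul_comm r]
  map_lie' {X Y} := by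
    have hXY : J * ⁅X, Y⁆.val
        = (⅟2 : R) • (2 : R) • (J * X * J * (J * Y) - J * Y * J * (J * X)) := by
      simp only [smul_smul, invOf_mul_self, one_smul, LieSubalgebra.coe_bracket, Ring.lie_def,
        Matrix.mul_assoc, ← Matrix.mul_assoc J J, hJJ, Matrix.one_mul, Matrix.mul_sub]
    rw [hXY, map_smul, ← quadOp_mul_quadOp_sub_mul_quadOp hc hJ
      (transpose_mul_eq_neg_of_mem_skewAdjoint hJ X.2), Ring.lie_def]
    simp only [smul_mul_smul_comm, smul_sub, smul_smul]

variable {hc : ∀ p q, c p * c q + c q * c p = J p q • 1} {hJ : Jᵀ = J} {hJJ : J * J = 1}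

lemma spinHom_apply (X : skewAdjointMatricesLieSubalgebra J) :
    spinHom hc hJ hJJ X = (⅟2 : R) • quadOp c (J * (X : Matrix ι ι R)) := rfl

lemma spinHom_mul_sub_mul (X : skewAdjointMatricesLieSubalgebra J) (r : ι) :
    spinHom hc hJ hJJ X * c r - c r * spinHom hc hJ hJJ X
      = ∑ p, (J * (X : Matrix ι ι R) * J) p r • c p := by
  rw [spinHom_apply, smul_mul_assoc, mul_smul_comm, ← smul_sub,
    quadOp_mul_sub_mul hc (transpose_mul_eq_neg_of_mem_skewAdjoint hJ X.2), Finset.smul_sum]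
  simp only [Matrix.smul_apply, smul_eq_mul, smul_smul, ← mul_assoc, invOf_mul_self, one_mul]

lemma spinHom_injective (hlin : LinearIndependent R c) :
    Function.Injective (spinHom hc hJ hJJ) := by
  refine (injective_iff_map_eq_zero _).2 fun X hX => ?_
  have hJXJ : J * (X : Matrix ι ι R) * J = 0 := by
    ext p r
    have h := spinHom_mul_sub_mul (hc := hc) (hJ := hJ) (hJJ := hJJ) X r
    rw [hX, zero_mul, mul_zero, sub_zero] at h
    exact Fintype.linearIndependent_iff.1 hlin _ h.symm p
  have : (X : Matrix ι ι R) = J * (J * X * J) * J := by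
    rw [← Matrix.mul_assoc, ← Matrix.mul_assoc, hJJ, Matrix.one_mul, Matrix.mul_assoc, hJJ,
      Matrix.mul_one]
  exact Subtype.ext (by rw [this, hJXJ, Matrix.mul_zero, Matrix.zero_mul]; rfl)

lemma spinHom_single_sub_single (p q : ι) :
    spinHom hc hJ hJJ ⟨_, mul_single_sub_single_mem_skewAdjoint hJ hJJ p q⟩
      = (⅟2 : R) • (c p * c q - c q * c p) := by
  rw [spinHom_apply, ← Matrix.mul_assoc, hJJ, Matrix.one_mul, map_sub, quadOp_single,
    quadOp_single]

lemma range_spinHom :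
    (spinHom hc hJ hJJ).range.toSubmodule
      = Submodule.span R (Set.range fun pq : ι × ι => c pq.1 * c pq.2 - c pq.2 * c pq.1) := by
  apply le_antisymm
  · rintro _ ⟨X, rfl⟩
    have h2 : (2 : R) • spinHom hc hJ hJJ X
        = (⅟2 : R) • ∑ p, ∑ q, (J * (X : Matrix ι ι R)) p q • (c p * c q - c q * c p) := by
      rw [← smul_quadOp_eq_sum_commutator (transpose_mul_eq_neg_of_mem_skewAdjoint hJ X.2),
        spinHom_apply, smul_comm]
    change spinHom hc hJ hJJ X ∈ _
    rw [← invOf_smul_smul (2 : R) (spinHom hc hJ hJJ X), h2]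
    exact Submodule.smul_mem _ _ <| Submodule.smul_mem _ _ <| Submodule.sum_mem _ fun p _ =>
      Submodule.sum_mem _ fun q _ => Submodule.smul_mem _ _ <| Submodule.subset_span ⟨(p, q), rfl⟩
  · refine Submodule.span_le.2 ?_
    rintro _ ⟨⟨p, q⟩, rfl⟩
    dsimp only
    rw [← smul_invOf_smul (2 : R) (c p * c q - c q * c p),
      ← spinHom_single_sub_single (hc := hc) (hJ := hJ) (hJJ := hJJ)]
    exact Submodule.smul_mem _ _ ⟨_, rfl⟩

end SpinHom

namespace LieAlgebra.Orthogonal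

universe u

lemma jd_transpose (l R : Type*) [CommRing R] [DecidableEq l] : (JD l R)ᵀ = JD l R := by
  simp [JD, Matrix.fromBlocks_transpose]

lemma jd_mul_self (l R : Type*) [CommRing R] [Fintype l] [DecidableEq l] :
    JD l R * JD l R = 1 := by
  simp [JD, Matrix.fromBlocks_multiply, ← Matrix.fromBlocks_one]

variable {R : Type*} {n : Type u} [CommRing R] [Fintype n]

def soEquivOfEquiv [DecidableEq n] {m : Type u} [Fintype m] [DecidableEq m] (e : n ≃ m) :
    so n R ≃ₗ⁅R⁆ so m R := by
  refine (skewAdjointMatricesLieSubalgebraEquivTranspose (1 : Matrix n n R)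
    (Matrix.reindexAlgEquiv R R e) (Matrix.transpose_reindex e e)).trans
    (LieEquiv.ofEq _ (so m R) ?_)
  rw [map_one]
  rfl

variable [LinearOrder n]

def skewOfUpperEntries (g : {p : n × n // p.1 < p.2} → R) : Matrix n n R :=
  Matrix.of fun i j => if h : i < j then g ⟨(i, j), h⟩ else if h : j < i then -g ⟨(j, i), h⟩ else 0

lemma skewOfUpperEntries_mem_so (g : {p : n × n // p.1 < p.2} → R) :
    skewOfUpperEntries g ∈ so n R := by
  rw [mem_so]
  ext i j
  rcases lt_trichotomy i j with h | h | h <;> simp [skewOfUpperEntries, h, h.not_gt]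

variable [Invertible (2 : R)]

def soEquivUpperEntries : so n R ≃ₗ[R] ({p : n × n // p.1 < p.2} → R) where
  toFun A p := (A : Matrix n n R) p.1.1 p.1.2
  invFun g := ⟨skewOfUpperEntries g, skewOfUpperEntries_mem_so g⟩
  map_add' _ _ := rfl
  map_smul' _ _ := rfl
  left_inv A := by
    have hA := fun i j => entry_eq_neg_of_transpose_eq_neg ((mem_so n R _).1 A.2) i j
    ext i j
    rcases lt_trichotomy i j with h | rfl | h
    · simp [skewOfUpperEntries, h]
    · have hdiag : (A : Matrix n n R) i i = 0 := by
        rw [← invOf_mul_cancel_left (2 : R) ((A : Matrix n n R) i i), two_mul]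
        nth_rewrite 2 [hA i i]
        rw [add_neg_cancel, mul_zero]
      simp [skewOfUpperEntries, hdiag]
    · simp [skewOfUpperEntries, h, h.not_gt, hA j i]
  right_inv g := by
    funext p
    simp [skewOfUpperEntries, p.2]

lemma finrank_so [Nontrivial R] : Module.finrank R (so n R) = (Fintype.card n).choose 2 := by
  rw [soEquivUpperEntries.finrank_eq, Module.finrank_fintype_fun_eq_card, Fintype.card_subtype,
    Fintype.card_product_filter_lt]

end LieAlgebra.Orthogonal

section SpinRep

open LieAlgebra.Orthogonal

variable {N : ℕ}

def fermionOp (N : ℕ) : Fin N ⊕ Fin N → Module.End ℂ (Fock N) := Sum.elim wedgeOp contrOp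

lemma fermionOp_anticomm (p q : Fin N ⊕ Fin N) :
    fermionOp N p * fermionOp N q + fermionOp N q * fermionOp N p = JD (Fin N) ℂ p q • 1 := by
  rcases p with i | i <;> rcases q with j | j
  · simp [fermionOp, JD, wedgeOp_anticomm]
  · simp [fermionOp, JD, wedgeOp_contrOp_anticomm, Matrix.one_apply]
  · simp [fermionOp, JD, add_comm (contrOp i * wedgeOp j), wedgeOp_contrOp_anticomm,
      Matrix.one_apply, eq_comm]
  · simp [fermionOp, JD, contrOp_anticomm]

lemma linearIndependent_fermionOp : LinearIndependent ℂ (fermionOp N) := by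
  rw [Fintype.linearIndependent_iff]
  intro g hg
  have hwedge : ∀ i, g (Sum.inl i) = 0 := by
    intro i
    have h := congr_fun (LinearMap.congr_fun hg (vac N)) {i}
    simpa [fermionOp, Fintype.sum_sum_type, wedgeOp_vac, contrOp_vac, Pi.single_apply] using h
  have hcontr : ∀ i, g (Sum.inr i) = 0 := by
    intro i
    have h := congr_fun (LinearMap.congr_fun hg (Pi.single {i} 1)) ∅
    simpa [fermionOp, Fintype.sum_sum_type, wedgeOp_apply, contrOp_apply, sgn,
      Pi.single_apply] using h
  rintro (i | i)
  exacts [hwedge i, hcontr i]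

lemma fermionOp_mul_sub_half (p q : Fin N ⊕ Fin N) :
    fermionOp N p * fermionOp N q - (JD (Fin N) ℂ p q / 2) • 1
      = (1 / 2 : ℂ) • (fermionOp N p * fermionOp N q - fermionOp N q * fermionOp N p) := by
  rw [← sub_eq_of_eq_add' (fermionOp_anticomm p q).symm]
  module

lemma fermionOp_mul_sub_half_mem_span_soOps (p q : Fin N ⊕ Fin N) :
    fermionOp N p * fermionOp N q - (JD (Fin N) ℂ p q / 2) • 1 ∈ Submodule.span ℂ (soOps N) := by
  rcases p with i | i <;> rcases q with j | j
  · exact Submodule.subset_span (Or.inl ⟨i, j, by simp [fermionOp, JD]⟩)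
  · refine Submodule.subset_span (Or.inr (Or.inr ⟨i, j, ?_⟩))
    split_ifs with h <;> simp [fermionOp, JD, h]
  · have hswap : fermionOp N (Sum.inr i) * fermionOp N (Sum.inl j)
        = JD (Fin N) ℂ (Sum.inl j) (Sum.inr i) • 1
          - fermionOp N (Sum.inl j) * fermionOp N (Sum.inr i) :=
      eq_sub_of_add_eq' (fermionOp_anticomm _ _)
    rw [hswap, ← neg_mem_iff]
    refine Submodule.subset_span (Or.inr (Or.inr ⟨j, i, ?_⟩))
    by_cases h : j = i
    · subst h
      simp only [fermionOp, JD, Matrix.fromBlocks_apply₁₂, Matrix.fromBlocks_apply₂₁,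
        Matrix.one_apply_eq, if_true, Sum.elim_inl, Sum.elim_inr]
      module
    · simp [fermionOp, JD, h, Ne.symm h]
  · exact Submodule.subset_span (Or.inr (Or.inl ⟨i, j, by simp [fermionOp, JD]⟩))

lemma span_soOps_eq_span_commutators (N : ℕ) :
    Submodule.span ℂ (soOps N) = Submodule.span ℂ
      (Set.range fun pq : (Fin N ⊕ Fin N) × (Fin N ⊕ Fin N) =>
        fermionOp N pq.1 * fermionOp N pq.2 - fermionOp N pq.2 * fermionOp N pq.1) := by
  apply le_antisymm <;> rw [Submodule.span_le]
  · intro T hT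
    obtain ⟨p, q, rfl⟩ :
        ∃ p q, T = fermionOp N p * fermionOp N q - (JD (Fin N) ℂ p q / 2) • 1 := by
      rcases hT with ⟨i, j, rfl⟩ | ⟨i, j, rfl⟩ | ⟨i, j, rfl⟩
      · exact ⟨Sum.inl i, Sum.inl j, by simp [fermionOp, JD]⟩
      · exact ⟨Sum.inr i, Sum.inr j, by simp [fermionOp, JD]⟩
      · refine ⟨Sum.inl i, Sum.inr j, ?_⟩
        split_ifs with h <;> simp [fermionOp, JD, h]
    rw [SetLike.mem_coe, fermionOp_mul_sub_half]
    exact Submodule.smul_mem _ _ (Submodule.subset_span ⟨(p, q), rfl⟩)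
  · rintro _ ⟨⟨p, q⟩, rfl⟩
    have h := Submodule.smul_mem _ (2 : ℂ) (fermionOp_mul_sub_half_mem_span_soOps p q)
    rwa [fermionOp_mul_sub_half, smul_smul, show (2 : ℂ) * (1 / 2) = 1 by norm_num, one_smul] at h

def spinRep (k : ℕ) : typeD (Fin k) ℂ →ₗ⁅ℂ⁆ Module.End ℂ (Fock k) :=
  spinHom fermionOp_anticomm (jd_transpose _ _) (jd_mul_self _ _)

lemma spinRep_injective (k : ℕ) : Function.Injective (spinRep k) :=
  spinHom_injective linearIndependent_fermionOp

lemma range_spinRep (k : ℕ) : (spinRep k).range.toSubmodule = Submodule.span ℂ (soOps k) :=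
  range_spinHom.trans (span_soOps_eq_span_commutators k).symm

end SpinRep

section Parity
variable {N : ℕ}

def HasParity (e : ZMod 2) (f : Fock N) : Prop :=
  ∀ S : Finset (Fin N), (S.card : ZMod 2) ≠ e → f S = 0

lemma mem_evenSub_iff_hasParity_zero {f : Fock N} : f ∈ evenSub N ↔ HasParity 0 f := by
  simp only [HasParity, ne_eq, ZMod.natCast_eq_zero_iff_even]
  rfl

lemma HasParity.wedgeOp {e : ZMod 2} {f : Fock N} (hf : HasParity e f) (i : Fin N) :
    HasParity (e + 1) (wedgeOp i f) := by
  intro S hS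
  rw [wedgeOp_apply]
  by_cases hi : i ∈ S
  · rw [hf (S.erase i) fun h => hS ?_, mul_zero]
    rw [← Finset.card_erase_add_one hi, Nat.cast_succ, h]
  · rw [if_neg hi, zero_mul]

lemma HasParity.contrOp {e : ZMod 2} {f : Fock N} (hf : HasParity e f) (i : Fin N) :
    HasParity (e + 1) (contrOp i f) := by
  intro S hS
  rw [contrOp_apply]
  by_cases hi : i ∈ S
  · rw [if_pos hi, zero_mul]
  · rw [hf (insert i S) fun h => hS ?_, mul_zero]
    rw [Finset.card_insert_of_notMem hi, Nat.cast_succ] at h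
    rw [← h, add_assoc, show (1 + 1 : ZMod 2) = 0 from rfl, add_zero]

lemma apply_mem_evenSub_of_mem_soOps {T : Module.End ℂ (Fock N)} (hT : T ∈ soOps N) {f : Fock N}
    (hf : f ∈ evenSub N) : T f ∈ evenSub N := by
  have h2 : (0 : ZMod 2) + 1 + 1 = 0 := rfl
  rw [mem_evenSub_iff_hasParity_zero] at hf
  rcases hT with ⟨i, j, rfl⟩ | ⟨i, j, rfl⟩ | ⟨i, j, rfl⟩
  · rw [mem_evenSub_iff_hasParity_zero, ← h2]
    exact (hf.wedgeOp j).wedgeOp i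
  · rw [mem_evenSub_iff_hasParity_zero, ← h2]
    exact (hf.contrOp j).contrOp i
  · refine Submodule.sub_mem _ ?_ ?_
    · rw [mem_evenSub_iff_hasParity_zero, ← h2]
      exact (hf.contrOp j).wedgeOp i
    · split_ifs
      · exact Submodule.smul_mem _ _ (mem_evenSub_iff_hasParity_zero.2 hf)
      · exact Submodule.zero_mem _

end Parity

lemma forall_mem_span_apply_mem_iff {R V : Type*} [CommRing R] [AddCommGroup V] [Module R V]
    (s : Set (Module.End R V)) (U : Submodule R V) :
    (∀ T ∈ Submodule.span R s, ∀ u ∈ U, T u ∈ U) ↔ ∀ T ∈ s, ∀ u ∈ U, T u ∈ U :=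
  ⟨fun h T hT => h T (Submodule.subset_span hT),
    fun h _ hT => Submodule.span_le (p := U.compatibleMaps U) |>.2 h hT⟩

section Irreducible
variable {N : ℕ} {U : Submodule ℂ (Fock N)}

lemma wedgeOp_mul_contrOp_self_mem (hU : ∀ T ∈ soOps N, ∀ u ∈ U, T u ∈ U) (i : Fin N)
    {u : Fock N} (hu : u ∈ U) : (wedgeOp i * contrOp i) u ∈ U := by
  have h := U.add_mem (hU _ (Or.inr (Or.inr ⟨i, i, rfl⟩)) u hu) (U.smul_mem (1 / 2 : ℂ) hu)
  simpa using h

lemma contrOp_mul_wedgeOp_self_mem (hU : ∀ T ∈ soOps N, ∀ u ∈ U, T u ∈ U) (i : Fin N)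
    {u : Fock N} (hu : u ∈ U) : (contrOp i * wedgeOp i) u ∈ U := by
  have hcw : contrOp i * wedgeOp i = 1 - wedgeOp i * contrOp i := by
    simpa using eq_sub_of_add_eq' (wedgeOp_contrOp_anticomm i i)
  rw [hcw, LinearMap.sub_apply, Module.End.one_apply]
  exact U.sub_mem hu (wedgeOp_mul_contrOp_self_mem hU i hu)

lemma smul_single_mem (hU : ∀ T ∈ soOps N, ∀ u ∈ U, T u ∈ U) {f : Fock N} (hf : f ∈ U)
    (S : Finset (Fin N)) : f S • Pi.single S 1 ∈ U := by
  have hproj : ∀ s : Finset (Fin N), ∃ g ∈ U, ∀ T,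
      g T = if ∀ i ∈ s, (i ∈ T ↔ i ∈ S) then f T else 0 := by
    intro s
    induction s using Finset.induction_on with
    | empty => exact ⟨f, hf, fun T => by simp⟩
    | insert i s _ ih =>
      obtain ⟨g, hg, hgT⟩ := ih
      by_cases hiS : i ∈ S
      · refine ⟨(wedgeOp i * contrOp i) g, wedgeOp_mul_contrOp_self_mem hU i hg, fun T => ?_⟩
        by_cases hiT : i ∈ T <;> simp [wedgeOp_mul_contrOp_self_apply, hgT, hiS, hiT]
      · refine ⟨(contrOp i * wedgeOp i) g, contrOp_mul_wedgeOp_self_mem hU i hg, fun T => ?_⟩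
        by_cases hiT : i ∈ T <;> simp [contrOp_mul_wedgeOp_self_apply, hgT, hiS, hiT]
  obtain ⟨g, hg, hgT⟩ := hproj Finset.univ
  convert hg using 1
  funext T
  simp only [hgT, Finset.mem_univ, forall_const, ← Finset.ext_iff, Pi.smul_apply,
    Pi.single_apply, smul_eq_mul, mul_ite, mul_one, mul_zero]
  split_ifs with h <;> simp [h]

lemma single_insert_insert_mem_iff (hU : ∀ T ∈ soOps N, ∀ u ∈ U, T u ∈ U) {i j : Fin N}
    {T : Finset (Fin N)} (hij : i ≠ j) (hi : i ∉ T) (hj : j ∉ T) :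
    Pi.single (insert i (insert j T)) 1 ∈ U ↔ Pi.single T 1 ∈ U := by
  have hi' : i ∉ insert j T := by simp [hi, hij]
  constructor
  · intro h
    have hmem := hU _ (Or.inr (Or.inl ⟨j, i, rfl⟩)) _ h
    rwa [Module.End.mul_apply, contrOp_single_of_mem (Finset.mem_insert_self i _),
      Finset.erase_insert hi', map_smul, contrOp_single_of_mem (Finset.mem_insert_self j _),
      Finset.erase_insert hj, smul_smul, Submodule.smul_mem_iff _
        (mul_ne_zero (sgn_ne_zero _ _) (sgn_ne_zero _ _))] at hmem
  · intro h
    have hmem := hU _ (Or.inl ⟨i, j, rfl⟩) _ h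
    rwa [Module.End.mul_apply, wedgeOp_single_of_notMem hj, map_smul,
      wedgeOp_single_of_notMem hi', smul_smul, Submodule.smul_mem_iff _
        (mul_ne_zero (sgn_ne_zero _ _) (sgn_ne_zero _ _))] at hmem

lemma single_mem_iff_single_empty_mem (hU : ∀ T ∈ soOps N, ∀ u ∈ U, T u ∈ U)
    {S : Finset (Fin N)} (hS : Even S.card) :
    Pi.single S 1 ∈ U ↔ Pi.single ∅ 1 ∈ U := by
  induction hn : S.card using Nat.strong_induction_on generalizing S with
  | _ n ih =>
    obtain rfl | ⟨i, hi⟩ := S.eq_empty_or_nonempty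
    · rfl
    obtain ⟨j, hj⟩ : (S.erase i).Nonempty := by
      rw [← Finset.card_pos]
      have := Finset.card_erase_add_one hi
      obtain ⟨m, hm⟩ := hS
      omega
    set T := (S.erase i).erase j
    have hST : S = insert i (insert j T) := by
      rw [Finset.insert_erase hj, Finset.insert_erase hi]
    have hcard : T.card + 2 = n := by
      rw [← hn, ← Finset.card_erase_add_one hi, ← Finset.card_erase_add_one hj]
    rw [hST, single_insert_insert_mem_iff hU (Finset.ne_of_mem_erase hj).symm
      (fun h => Finset.notMem_erase i S (Finset.mem_of_mem_erase h)) (Finset.notMem_erase j _)]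
    exact ih T.card (by omega) (by rw [hn, ← hcard] at hS; simpa [Nat.even_add] using hS) rfl

lemma eq_bot_or_eq_evenSub (hle : U ≤ evenSub N) (hU : ∀ T ∈ soOps N, ∀ u ∈ U, T u ∈ U) :
    U = ⊥ ∨ U = evenSub N := by
  refine or_iff_not_imp_left.2 fun hne => ?_
  obtain ⟨f, hf, hf0⟩ := Submodule.exists_mem_ne_zero_of_ne_bot hne
  obtain ⟨S, hS⟩ : ∃ S, f S ≠ 0 := by
    by_contra! h
    exact hf0 (funext h)
  have hvac : Pi.single ∅ 1 ∈ U :=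
    (single_mem_iff_single_empty_mem hU (not_not.1 fun h => hS (hle hf S h))).1
      ((U.smul_mem_iff hS).1 (smul_single_mem hU hf S))
  refine le_antisymm hle fun g hg => ?_
  rw [← Finset.univ_sum_single g]
  refine U.sum_mem fun T _ => ?_
  by_cases hT : Even T.card
  · rw [← mul_one (g T), ← smul_eq_mul, Pi.single_smul']
    exact U.smul_mem _ ((single_mem_iff_single_empty_mem hU hT).2 hvac)
  · rw [hg T hT, Pi.single_zero]
    exact U.zero_mem

end Irreducible

section HighestWeight
variable {N : ℕ}

lemma contrOp_wedgeOp_self_apply {i : Fin N} {v : Fock N} (hv : contrOp i v = 0) :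
    contrOp i (wedgeOp i v) = v := by
  have h := LinearMap.congr_fun (wedgeOp_contrOp_anticomm i i) v
  simpa [hv] using h

lemma contrOp_wedgeOp_apply_of_ne {i j : Fin N} (hij : i ≠ j) (v : Fock N) :
    contrOp j (wedgeOp i v) = -wedgeOp i (contrOp j v) := by
  have h := LinearMap.congr_fun (wedgeOp_contrOp_anticomm i j) v
  simp only [if_neg hij, zero_smul, LinearMap.add_apply, Module.End.mul_apply,
    LinearMap.zero_apply] at h
  exact eq_neg_of_add_eq_zero_right h

lemma lie_contrOp_mul_contrOp_wedgeOp_mul_wedgeOp_vac {a b : Fin N} (hab : a ≠ b) :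
    ⁅contrOp a * contrOp b, wedgeOp b * wedgeOp a⁆ (vac N) = vac N := by
  have hb : contrOp b (wedgeOp a (vac N)) = 0 := by
    rw [contrOp_wedgeOp_apply_of_ne hab, contrOp_vac, map_zero, neg_zero]
  simp only [Ring.lie_def, LinearMap.sub_apply, Module.End.mul_apply, contrOp_vac, map_zero,
    sub_zero, contrOp_wedgeOp_self_apply hb, contrOp_wedgeOp_self_apply (contrOp_vac a)]

end HighestWeight

lemma Nat.two_mul_choose_two (k : ℕ) : (2 * k).choose 2 = 2 * k ^ 2 - k := by
  rw [Nat.choose_two_right]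
  rcases Nat.eq_zero_or_pos k with rfl | hk
  · rfl
  have h : 2 * k * (2 * k - 1) = 2 * (2 * k ^ 2 - k) := by
    zify [show 1 ≤ 2 * k by omega, show k ≤ 2 * k ^ 2 by nlinarith]
    ring
  rw [h, Nat.mul_div_cancel_left _ two_pos]

/-- Indices are 0-based: the simple root vectors `X_i^±` of the statement use `i, i + 1` for
`i = 0, …, k - 2`, and the last ones use `k - 2, k - 1`. -/
theorem statement_10 (k : ℕ) (hk : 2 ≤ k) :
    -- (1)
    (∃ S : LieSubalgebra ℂ (Module.End ℂ (Fock k)),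
      S.toSubmodule = Submodule.span ℂ (soOps k) ∧
      Module.finrank ℂ S = 2*k^2 - k ∧
      Nonempty (S ≃ₗ⁅ℂ⁆ (LieAlgebra.Orthogonal.so (Fin (2*k)) ℂ))) ∧
    -- (2)
    (∀ T ∈ Submodule.span ℂ (soOps k), ∀ f ∈ evenSub k, T f ∈ evenSub k) ∧
    (∀ U : Submodule ℂ (Fock k), U ≤ evenSub k →
      (∀ T ∈ Submodule.span ℂ (soOps k), ∀ u ∈ U, T u ∈ U) →
      U = ⊥ ∨ U = evenSub k) ∧
    -- (3)
    (∀ i : ℕ, ∀ h : i + 1 < k,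
      (wedgeOp (⟨i+1, h⟩ : Fin k) * contrOp (⟨i, by omega⟩ : Fin k)) (vac k) = 0 ∧
      ⁅wedgeOp (⟨i+1, h⟩ : Fin k) * contrOp (⟨i, by omega⟩ : Fin k),
        wedgeOp (⟨i, by omega⟩ : Fin k) * contrOp (⟨i+1, h⟩ : Fin k)⁆ (vac k) = 0) ∧
    (contrOp (⟨k-1, by omega⟩ : Fin k) * contrOp (⟨k-2, by omega⟩ : Fin k)) (vac k) = 0 ∧
    ⁅contrOp (⟨k-1, by omega⟩ : Fin k) * contrOp (⟨k-2, by omega⟩ : Fin k),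
      wedgeOp (⟨k-2, by omega⟩ : Fin k) * wedgeOp (⟨k-1, by omega⟩ : Fin k)⁆ (vac k)
      = vac k := by
  have e : (spinRep k).range ≃ₗ⁅ℂ⁆ LieAlgebra.Orthogonal.so (Fin (2 * k)) ℂ :=
    (LieEquiv.ofInjective _ (spinRep_injective k)).symm.trans <|
      (LieAlgebra.Orthogonal.typeDEquivSo' (Fin k) ℂ).trans <|
      (LieAlgebra.Orthogonal.soIndefiniteEquiv (Fin k) (Fin k) ℂ Complex.I_mul_I).trans <|
      LieAlgebra.Orthogonal.soEquivOfEquiv (finSumFinEquiv.trans (finCongr (two_mul k).symm))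
  refine ⟨⟨(spinRep k).range, range_spinRep k, ?_, ⟨e⟩⟩, ?_, ?_, ?_, ?_, ?_⟩
  · rw [e.toLinearEquiv.finrank_eq, LieAlgebra.Orthogonal.finrank_so, Fintype.card_fin,
      Nat.two_mul_choose_two]
  · exact (forall_mem_span_apply_mem_iff _ _).2 fun _ hT _ hf =>
      apply_mem_evenSub_of_mem_soOps hT hf
  · exact fun U hle hU => eq_bot_or_eq_evenSub hle ((forall_mem_span_apply_mem_iff _ _).1 hU)
  · intro i h
    simp [Ring.lie_def, contrOp_vac]
  · simp [contrOp_vac]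
  · exact lie_contrOp_mul_contrOp_wedgeOp_mul_wedgeOp_vac (by simp [Fin.ext_iff]; omega)
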